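/- Conditions (1)–(3) together with: N(a_i) ≤ δ^{1/2} for all i and no rational integer n ≥ 2 divides a_i a_j for i ≠ j, imply condition (4): if a_i a_j − c² is totally positive for c ∈ O_K, then c = 0. -/

import Mathlib

/-!
Put `β = aᵢ aⱼ` in `ℤ[ω]` and let `σ`, `σ'` be the two real embeddings, so that
`σ ω - σ' ω = δ`. If `c ≠ 0` and `β - c²` is totally positive, then both conjugates of
`ζ = β c'²` lie strictly between `N(c)² ≥ 1` and `N(β) ≤ δ`. As `σ ζ - σ' ζ = ζ_im δ`, this
forces `ζ_im = 0`, so `ζ` is a rational integer `P > N(c)²`. Multiplying by `c²` gives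
`N(c)² β = P c²`, hence `P / gcd(P, N(c)²) ≥ 2` divides `β`.
-/

theorem Int.ediv_gcd_dvd_of_mul_eq_mul {n k x y : ℤ} (hk : 0 < k) (h : n * x = k * y) :
    k / gcd k n ∣ x := by
  have hx : n * x ≡ n * 0 [ZMOD k] := by
    rw [mul_zero, Int.modEq_zero_iff_dvd, h]
    exact dvd_mul_right k y
  exact Int.modEq_zero_iff_dvd.mp (hx.cancel_left_div_gcd hk)

theorem Int.two_le_ediv_gcd {n k : ℤ} (hn : 0 < n) (hnk : n < k) : 2 ≤ k / gcd k n := by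
  have hg : (gcd k n : ℤ) ≤ n := Int.gcd_le_right k hn
  have hg0 : (0 : ℤ) < gcd k n := by exact_mod_cast Int.gcd_pos_of_ne_zero_right k hn.ne'
  obtain ⟨q, hq⟩ := Int.gcd_dvd_left k n
  have hq2 : 2 ≤ q := by
    by_contra! hq2
    nlinarith
  rw [Int.le_ediv_iff_mul_le hg0]
  nlinarith

namespace QuadraticAlgebra

variable {a b : ℤ}

theorem exists_two_le_intCast_dvd_of_mul_eq_mul {n k : ℤ} {x y : QuadraticAlgebra ℤ a b}
    (hn : 0 < n) (hnk : n < k) (h : (n : QuadraticAlgebra ℤ a b) * x = k * y) :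
    ∃ m : ℤ, 2 ≤ m ∧ (m : QuadraticAlgebra ℤ a b) ∣ x := by
  have hk : 0 < k := hn.trans hnk
  refine ⟨k / Int.gcd k n, Int.two_le_ediv_gcd hn hnk, ?_⟩
  rw [← eq_intCast (algebraMap ℤ (QuadraticAlgebra ℤ a b)), algebraMap_dvd_iff]
  have hre := congrArg re h
  have him := congrArg im h
  simp only [re_mul, im_mul, re_intCast, im_intCast, Int.cast_eq, mul_zero, zero_mul,
    add_zero] at hre him
  exact ⟨Int.ediv_gcd_dvd_of_mul_eq_mul hk hre, Int.ediv_gcd_dvd_of_mul_eq_mul hk him⟩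

theorem lift_star_mk {τ τ' : ℝ} (hτ : τ * τ = a • 1 + b • τ) (hττ' : τ + τ' = b) (x y : ℤ) :
    lift ⟨τ, hτ⟩ (star (⟨x, y⟩ : QuadraticAlgebra ℤ a b)) = x + y * τ' := by
  simp only [star_mk, lift_apply_apply, zsmul_eq_mul, mul_one, neg_smul, Int.cast_add,
    Int.cast_mul]
  linear_combination -(y : ℝ) * hττ'

variable (σ : QuadraticAlgebra ℤ a b →+* ℝ)

theorem map_eq_re_add_im_mul (z : QuadraticAlgebra ℤ a b) : σ z = z.re + z.im * σ ω := by
  conv_lhs => rw [← mk_eta z, mk_eq_add_smul_omega]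
  simp

theorem map_sub_map_star (z : QuadraticAlgebra ℤ a b) :
    σ z - σ (star z) = z.im * (σ ω - σ (star ω)) := by
  rw [← map_sub, sub_star, ← map_sub]
  simp

theorem intCast_norm (z : QuadraticAlgebra ℤ a b) : ((norm z : ℤ) : ℝ) = σ z * σ (star z) := by
  rw [← map_mul, ← algebraMap_norm_eq_mul_star]
  simp

theorem eq_zero_of_map_eq_zero (hω : Irrational (σ ω)) {z : QuadraticAlgebra ℤ a b}
    (hz : σ z = 0) : z = 0 := by
  rw [map_eq_re_add_im_mul] at hz
  have him : z.im = 0 := by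
    by_contra him
    exact ((hω.intCast_mul him).intCast_add z.re).ne_zero hz
  have hre : z.re = 0 := by simpa [him] using hz
  exact QuadraticAlgebra.ext hre him

theorem norm_ne_zero_of_irrational (hω : Irrational (σ ω)) {z : QuadraticAlgebra ℤ a b}
    (hz : z ≠ 0) : norm z ≠ 0 := by
  intro h
  have h' : σ z * σ (star z) = 0 := by rw [← intCast_norm, h, Int.cast_zero]
  rcases mul_eq_zero.mp h' with h' | h'
  · exact hz (eq_zero_of_map_eq_zero σ hω h')
  · exact hz (star_eq_zero.mp (eq_zero_of_map_eq_zero σ hω h'))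

theorem im_eq_zero_of_abs_sub_lt {z : QuadraticAlgebra ℤ a b}
    (h : |σ z - σ (star z)| < σ ω - σ (star ω)) : z.im = 0 := by
  have hδ : 0 < σ ω - σ (star ω) := (abs_nonneg _).trans_lt h
  rw [map_sub_map_star, abs_mul, abs_of_pos hδ] at h
  have him : |(z.im : ℝ)| < 1 := (mul_lt_iff_lt_one_left hδ).mp h
  exact Int.abs_lt_one_iff.mp (by exact_mod_cast him)

theorem exists_two_le_intCast_dvd_of_sq_lt {β c : QuadraticAlgebra ℤ a b}
    (hβ : ((norm β : ℤ) : ℝ) ≤ σ ω - σ (star ω)) (hc : norm c ≠ 0)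
    (h : σ c ^ 2 < σ β) (h' : σ (star c) ^ 2 < σ (star β)) :
    ∃ m : ℤ, 2 ≤ m ∧ (m : QuadraticAlgebra ℤ a b) ∣ β := by
  set ζ := β * star c ^ 2 with hζ_def
  have hζ : σ ζ = σ β * σ (star c) ^ 2 := by simp [ζ]
  have hζ' : σ (star ζ) = σ (star β) * σ c ^ 2 := by simp [ζ, mul_comm]
  have hn : ((norm c ^ 2 : ℤ) : ℝ) = σ c ^ 2 * σ (star c) ^ 2 := by
    rw [Int.cast_pow, intCast_norm σ]; ring
  have hN := intCast_norm σ β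
  have hn1 : (1 : ℝ) ≤ ((norm c ^ 2 : ℤ) : ℝ) := by
    exact_mod_cast Int.one_le_abs (pow_ne_zero 2 hc) |>.trans_eq (abs_of_nonneg (sq_nonneg _))
  have hσc : σ c * σ (star c) ≠ 0 := by rw [← intCast_norm]; exact_mod_cast hc
  have hc0 : 0 < σ c ^ 2 := by have := left_ne_zero_of_mul hσc; positivity
  have hc0' : 0 < σ (star c) ^ 2 := by have := right_ne_zero_of_mul hσc; positivity
  have hlow : ((norm c ^ 2 : ℤ) : ℝ) < σ ζ := by
    rw [hn, hζ]; exact mul_lt_mul_of_pos_right h hc0'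
  have hlow' : ((norm c ^ 2 : ℤ) : ℝ) < σ (star ζ) := by
    rw [hn, hζ', mul_comm]; exact mul_lt_mul_of_pos_right h' hc0
  have hup : σ ζ < norm β := by
    rw [hN, hζ]; exact mul_lt_mul_of_pos_left h' (hc0.trans h)
  have hup' : σ (star ζ) < norm β := by
    rw [hN, hζ', mul_comm (σ β)]; exact mul_lt_mul_of_pos_left h (hc0'.trans h')
  have him : ζ.im = 0 :=
    im_eq_zero_of_abs_sub_lt σ (abs_sub_lt_iff.mpr ⟨by linarith, by linarith⟩)
  have hζre : ζ = (ζ.re : QuadraticAlgebra ℤ a b) := QuadraticAlgebra.ext rfl him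
  have hP : σ ζ = ζ.re := by
    conv_lhs => rw [hζre]
    exact map_intCast σ _
  refine exists_two_le_intCast_dvd_of_mul_eq_mul (n := norm c ^ 2) (y := c ^ 2)
    (sq_pos_of_ne_zero hc) (by exact_mod_cast hlow.trans_eq hP) ?_
  have hcc : ((norm c : ℤ) : QuadraticAlgebra ℤ a b) = c * star c := by
    rw [← algebraMap_norm_eq_mul_star, eq_intCast]
  rw [← hζre, hζ_def, Int.cast_pow, hcc]
  ring

end QuadraticAlgebra

theorem irrational_sqrt_of_squarefree {D : ℕ} (hD : Squarefree D) (hD1 : 1 < D) :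
    Irrational √D := by
  refine irrational_sqrt_natCast_iff.mpr fun ⟨e, he⟩ => ?_
  have he1 : e = 1 := Nat.isUnit_iff.mp (hD e (he ▸ dvd_rfl))
  simp [he, he1] at hD1

theorem exists_mul_self_eq_of_eq_ite_sqrt {D : ℕ} {ω ω' : ℝ}
    (hω : ω = if D % 4 = 1 then (1 + Real.sqrt D) / 2 else Real.sqrt D)
    (hω' : ω' = if D % 4 = 1 then (1 - Real.sqrt D) / 2 else -Real.sqrt D) :
    ∃ w0 w1 : ℤ, ω * ω = w0 • 1 + w1 • ω ∧ ω + ω' = w1 := by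
  have hsq : √(D : ℝ) * √(D : ℝ) = D := Real.mul_self_sqrt D.cast_nonneg
  split_ifs at hω hω' with hD
  · obtain ⟨m, hm⟩ : (4 : ℤ) ∣ D - 1 := by omega
    have hmr : (D : ℝ) = 4 * m + 1 := by
      have := congrArg (Int.cast (R := ℝ)) hm
      push_cast at this
      linarith
    refine ⟨m, 1, ?_, ?_⟩
    · simp only [hω, zsmul_eq_mul]; push_cast; linear_combination hsq / 4 + hmr / 4
    · rw [hω, hω']; push_cast; ring
  · refine ⟨D, 0, ?_, ?_⟩
    · simp only [hω, zsmul_eq_mul]; push_cast; linear_combination hsq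
    · rw [hω, hω']; push_cast; ring

theorem irrational_of_eq_ite_sqrt {D : ℕ} (hD : Squarefree D) (hD1 : 1 < D) {ω : ℝ}
    (hω : ω = if D % 4 = 1 then (1 + Real.sqrt D) / 2 else Real.sqrt D) : Irrational ω := by
  have hs := irrational_sqrt_of_squarefree hD hD1
  split_ifs at hω
  · rw [hω]
    exact_mod_cast (hs.intCast_add 1).div_intCast two_ne_zero
  · exact hω ▸ hs

theorem exists_ringHom_of_eq_ite_sqrt {D : ℕ} (hD : Squarefree D) (hD1 : 1 < D) {ω ω' δ : ℝ}
    (hω : ω = if D % 4 = 1 then (1 + Real.sqrt D) / 2 else Real.sqrt D)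
    (hω' : ω' = if D % 4 = 1 then (1 - Real.sqrt D) / 2 else -Real.sqrt D)
    (hδ : δ = if D % 4 = 1 then Real.sqrt D else 2 * Real.sqrt D) :
    ∃ (w0 w1 : ℤ) (σ : QuadraticAlgebra ℤ w0 w1 →+* ℝ), Irrational (σ QuadraticAlgebra.omega) ∧
      σ QuadraticAlgebra.omega - σ (star QuadraticAlgebra.omega) = δ ∧
      ∀ x y : ℤ, σ ⟨x, y⟩ = x + y * ω ∧ σ (star ⟨x, y⟩) = x + y * ω' := by
  obtain ⟨w0, w1, hωω, hωω'⟩ := exists_mul_self_eq_of_eq_ite_sqrt hω hω'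
  let σ := (QuadraticAlgebra.lift ⟨ω, hωω⟩ : QuadraticAlgebra ℤ w0 w1 →ₐ[ℤ] ℝ).toRingHom
  have hσ (x y : ℤ) : σ ⟨x, y⟩ = x + y * ω := by simp [σ]
  have hσ' (x y : ℤ) : σ (star ⟨x, y⟩) = x + y * ω' :=
    QuadraticAlgebra.lift_star_mk hωω hωω' x y
  refine ⟨w0, w1, σ, ?_, ?_, fun x y => ⟨hσ x y, hσ' x y⟩⟩
  · simpa [hσ] using irrational_of_eq_ite_sqrt hD hD1 hω
  · change σ ⟨0, 1⟩ - σ (star ⟨0, 1⟩) = δ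
    rw [hσ, hσ', hω, hω', hδ]
    split_ifs <;> push_cast <;> ring

theorem stmt4_general (D : ℕ) (hD : Squarefree D) (hD1 : 1 < D) (M : ℕ)
    (ω ω' δ : ℝ)
    (hω : ω = if D % 4 = 1 then (1 + Real.sqrt D) / 2 else Real.sqrt D)
    (hω' : ω' = if D % 4 = 1 then (1 - Real.sqrt D) / 2 else -Real.sqrt D)
    (hδ : δ = if D % 4 = 1 then Real.sqrt D else 2 * Real.sqrt D)
    (emb emb' : ℤ × ℤ → ℝ)
    (hemb : ∀ p, emb p = (p.1 : ℝ) + (p.2 : ℝ) * ω)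
    (hemb' : ∀ p, emb' p = (p.1 : ℝ) + (p.2 : ℝ) * ω')
    (a : Fin M → ℤ × ℤ)
    (hpos : ∀ i, 0 < emb (a i) ∧ 0 < emb' (a i))
    (h5a : ∀ i, emb (a i) * emb' (a i) ≤ Real.sqrt δ)
    (h5b : ∀ i j, i ≠ j → ∀ z : ℤ, 2 ≤ z →
      ¬∃ β : ℤ × ℤ, emb (a i) * emb (a j) = (z : ℝ) * emb β ∧
        emb' (a i) * emb' (a j) = (z : ℝ) * emb' β) :
    ∀ i j, i ≠ j → ∀ c : ℤ × ℤ,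
      0 < emb (a i) * emb (a j) - (emb c) ^ 2 →
      0 < emb' (a i) * emb' (a j) - (emb' c) ^ 2 → c = 0 := by
  intro i j hij c hci hcj
  obtain ⟨w0, w1, σ, hirr, hδσ, hσ⟩ := exists_ringHom_of_eq_ite_sqrt hD hD1 hω hω' hδ
  let ι : ℤ × ℤ → QuadraticAlgebra ℤ w0 w1 := fun p => ⟨p.1, p.2⟩
  have hσ₁ (p : ℤ × ℤ) : emb p = σ (ι p) := by rw [hemb, (hσ p.1 p.2).1]
  have hσ₂ (p : ℤ × ℤ) : emb' p = σ (star (ι p)) := by rw [hemb', (hσ p.1 p.2).2]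
  have hN : ((QuadraticAlgebra.norm (ι (a i) * ι (a j)) : ℤ) : ℝ) ≤
      σ QuadraticAlgebra.omega - σ (star QuadraticAlgebra.omega) := by
    have hδ0 : 0 ≤ δ := by rw [hδ]; split_ifs <;> positivity
    have hnorm (k : Fin M) :
        ((QuadraticAlgebra.norm (ι (a k)) : ℤ) : ℝ) = emb (a k) * emb' (a k) := by
      rw [QuadraticAlgebra.intCast_norm σ, hσ₁, hσ₂]
    rw [map_mul, Int.cast_mul, hnorm, hnorm, hδσ, ← Real.mul_self_sqrt hδ0]
    exact mul_le_mul (h5a i) (h5a j) (mul_pos (hpos j).1 (hpos j).2).le (Real.sqrt_nonneg δ)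
  by_contra hc
  obtain ⟨m, hm, γ, hγ⟩ := QuadraticAlgebra.exists_two_le_intCast_dvd_of_sq_lt σ hN
    (QuadraticAlgebra.norm_ne_zero_of_irrational σ hirr
      fun h => hc (Prod.ext (congrArg QuadraticAlgebra.re h) (congrArg QuadraticAlgebra.im h)))
    (by rw [← hσ₁, map_mul, ← hσ₁, ← hσ₁]; linarith)
    (by rw [← hσ₂, star_mul', map_mul, ← hσ₂, ← hσ₂]; linarith)
  refine h5b i j hij m hm ⟨(γ.re, γ.im), ?_, ?_⟩
  · rw [hσ₁, hσ₁, hσ₁, ← map_mul, hγ]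
    simp [ι]
  · rw [hσ₂, hσ₂, hσ₂, ← map_mul, ← star_mul', hγ]
    simp [ι]

/-- Conditions (1)-(3) of Proposition 4 together with `N(a i) ≤ δ^{1/2}` and
`n ∤ a i * a j` for all rational integers `n ≥ 2` and `i ≠ j` imply condition (4):
if `a i * a j - c²` is totally positive for some `c ∈ O_K`, then `c = 0`. -/
theorem stmt4 (D : ℕ) (hD : Squarefree D) (hD1 : 1 < D) (M : ℕ) (hM : 0 < M)
    (ω ω' δ : ℝ)
    (hω : ω = if D % 4 = 1 then (1 + Real.sqrt D) / 2 else Real.sqrt D)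
    (hω' : ω' = if D % 4 = 1 then (1 - Real.sqrt D) / 2 else -Real.sqrt D)
    (hδ : δ = if D % 4 = 1 then Real.sqrt D else 2 * Real.sqrt D)
    (emb emb' : ℤ × ℤ → ℝ)
    (hemb : ∀ p, emb p = (p.1 : ℝ) + (p.2 : ℝ) * ω)
    (hemb' : ∀ p, emb' p = (p.1 : ℝ) + (p.2 : ℝ) * ω')
    (a : Fin M → ℤ × ℤ) (ha1 : a ⟨0, hM⟩ = (1, 0))
    (hpos : ∀ i, 0 < emb (a i) ∧ 0 < emb' (a i))
    (h1 : ∀ i, emb (a i) * emb' (a i) ≤ δ)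
    (h2 : ∀ i, ∀ z : ℤ, 2 ≤ z → ¬(z ∣ (a i).1 ∧ z ∣ (a i).2))
    (h3 : ∀ i j, i ≠ j → ¬∃ x : ℤ × ℤ, emb (a i) = emb (a j) * (emb x) ^ 2)
    (h5a : ∀ i, emb (a i) * emb' (a i) ≤ Real.sqrt δ)
    (h5b : ∀ i j, i ≠ j → ∀ z : ℤ, 2 ≤ z →
      ¬∃ β : ℤ × ℤ, emb (a i) * emb (a j) = (z : ℝ) * emb β ∧
        emb' (a i) * emb' (a j) = (z : ℝ) * emb' β) :
    ∀ i j, i ≠ j → ∀ c : ℤ × ℤ,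
      0 < emb (a i) * emb (a j) - (emb c) ^ 2 →
      0 < emb' (a i) * emb' (a j) - (emb' c) ^ 2 → c = 0 :=
  stmt4_general D hD hD1 M ω ω' δ hω hω' hδ emb emb' hemb hemb' a hpos h5a h5b
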